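/- For a tree T, the inclusion U(T) ⊆ US holds if and only if T is isomorphic either to a star graph or to a double-star graph. -/

import Mathlib

open SimpleGraph

open scoped Classical in
/-- The distance induced by a vertex labeling `l` on a tree `G`: `0` on the
diagonal, and otherwise the maximum of `l` over the vertices of the unique
path joining the two points. -/
noncomputable def treeDist {V : Type*} {G : SimpleGraph V} (hG : G.IsTree)
    (l : V → NNReal) (u v : V) : NNReal :=
  if u = v then 0
  else (((hG.existsUnique_path u v).choose.support).map l).foldr max 0

/-- A labeling is non-degenerate if `max (l u) (l v) > 0` for every edge `{u, v}`. -/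
def Nondeg {V : Type*} (G : SimpleGraph V) (l : V → NNReal) : Prop :=
  ∀ u v, G.Adj u v → 0 < max (l u) (l v)

/-- `S` is a star graph with some center `c`: `c` is adjacent to every other
vertex and there are no other edges. -/
def IsStarGraph {W : Type*} (S : SimpleGraph W) : Prop :=
  ∃ c : W, ∀ a b : W, S.Adj a b ↔ ((a = c ∧ b ≠ c) ∨ (b = c ∧ a ≠ c))

/-- The vertex `u` has degree at least two: it has two distinct neighbors. -/
def DegGe2 {V : Type*} (G : SimpleGraph V) (u : V) : Prop :=
  ∃ a b : V, a ≠ b ∧ G.Adj u a ∧ G.Adj u b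

/-- A double-star graph: a tree with exactly two vertices of degree greater
than one. -/
def IsDoubleStar {W : Type*} (S : SimpleGraph W) : Prop :=
  S.IsTree ∧ ∃ u v : W, u ≠ v ∧ DegGe2 S u ∧ DegGe2 S v ∧
    ∀ w : W, DegGe2 S w → w = u ∨ w = v

/-! ### Auxiliary lemmas -/

section Aux

variable {V : Type*} {G : SimpleGraph V}

lemma le_foldrMax {s : List NNReal} {a : NNReal} (h : a ∈ s) : a ≤ s.foldr max 0 := by
  induction s with
  | nil => simp at h
  | cons b t ih =>
    rcases List.mem_cons.1 h with rfl | h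
    · exact le_max_left _ _
    · exact le_trans (ih h) (le_max_right _ _)

lemma uniquePath (hG : G.IsTree) {u v : V} {p q : G.Walk u v} (hp : p.IsPath)
    (hq : q.IsPath) : p = q :=
  (hG.existsUnique_path u v).unique hp hq

lemma treeDist_self (hG : G.IsTree) (l : V → NNReal) (x : V) :
    treeDist hG l x x = 0 := by
  simp [treeDist]

lemma treeDist_eq (hG : G.IsTree) (l : V → NNReal) {u v : V} (huv : u ≠ v)
    (p : G.Walk u v) (hp : p.IsPath) :
    treeDist hG l u v = (p.support.map l).foldr max 0 := by
  have h2 := (hG.existsUnique_path u v).choose_spec.2 p hp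
  simp only [treeDist, if_neg huv, ← h2]

lemma internal_degGe2 :
    ∀ {s t : V} (p : G.Walk s t), p.IsPath → ∀ z ∈ p.support, z ≠ s → z ≠ t →
      DegGe2 G z := by
  intro s t p
  induction p with
  | nil =>
    intro _ z hz hzs _
    simp only [SimpleGraph.Walk.support_nil, List.mem_singleton] at hz
    exact absurd hz hzs
  | @cons a b c h q ih =>
    intro hp z hz hzs hzt
    rw [SimpleGraph.Walk.support_cons, List.mem_cons] at hz
    rcases hz with rfl | hz
    · exact absurd rfl hzs
    · by_cases hzb : z = b
      · subst hzb
        cases q with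
        | nil => exact absurd rfl hzt
        | @cons _ d _ h' r =>
          refine ⟨a, d, ?_, h.symm, h'⟩
          intro had
          apply ((SimpleGraph.Walk.cons_isPath_iff h _).1 hp).2
          rw [had, SimpleGraph.Walk.support_cons]
          exact List.mem_cons_of_mem _ r.start_mem_support
      · exact ih ((SimpleGraph.Walk.cons_isPath_iff h q).1 hp).1 z hz hzb hzt

lemma adj_mem_path (hG : G.IsTree) {u w n : V} (p : G.Walk u w) (hp : p.IsPath)
    (hn : n ∈ p.support) (ha : G.Adj u n) : p.getVert 1 = n := by
  classical
  have ht := hp.takeUntil hn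
  have he : (SimpleGraph.Walk.cons ha SimpleGraph.Walk.nil).IsPath := by
    simp [ha.ne]
  have hEq := uniquePath hG ht he
  have hsp := p.take_spec hn
  rw [hEq] at hsp
  rw [← hsp]
  simp [SimpleGraph.Walk.cons_append, SimpleGraph.Walk.nil_append,
    SimpleGraph.Walk.getVert_cons_succ, SimpleGraph.Walk.getVert_zero]

lemma exists_neighbor_off (hG : G.IsTree) {u w : V} (p : G.Walk u w) (hp : p.IsPath)
    (hu : DegGe2 G u) : ∃ a, G.Adj u a ∧ a ∉ p.support := by
  obtain ⟨a, b, hab, ha, hb⟩ := hu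
  by_cases h1 : a ∈ p.support
  · by_cases h2 : b ∈ p.support
    · exact absurd ((adj_mem_path hG p hp h1 ha).symm.trans
        (adj_mem_path hG p hp h2 hb)) hab
    · exact ⟨b, hb, h2⟩
  · exact ⟨a, ha, h1⟩

lemma second_vertex {u w : V} (p : G.Walk u w) (hne : u ≠ w) (hnadj : ¬G.Adj u w) :
    ∃ z, z ∈ p.support ∧ z ≠ u ∧ z ≠ w := by
  cases p with
  | nil => exact absurd rfl hne
  | @cons _ b _ h q =>
    refine ⟨b, ?_, h.ne', ?_⟩
    · rw [SimpleGraph.Walk.support_cons]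
      exact List.mem_cons_of_mem _ q.start_mem_support
    · rintro rfl
      exact hnadj h

lemma cross_lemma (hG : G.IsTree) {u w a b z : V} (P : G.Walk u w) (hP : P.IsPath)
    (hua : G.Adj u a) (hna : a ∉ P.support) (hwb : G.Adj w b) (hnb : b ∉ P.support)
    (hz : z ∈ P.support) (hzu : z ≠ u) (hzw : z ≠ w) (Wk : G.Walk a b) :
    z ∈ Wk.support := by
  classical
  set W' : G.Walk u w :=
    SimpleGraph.Walk.cons hua (Wk.append (SimpleGraph.Walk.cons hwb.symm
      SimpleGraph.Walk.nil)) with hW'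
  have hbp := W'.bypass_isPath
  have hEq : W'.bypass = P := uniquePath hG hbp hP
  have hz' : z ∈ W'.support := W'.support_bypass_subset (hEq ▸ hz)
  rw [hW', SimpleGraph.Walk.support_cons, List.mem_cons] at hz'
  rcases hz' with rfl | hz'
  · exact absurd rfl hzu
  · rw [SimpleGraph.Walk.support_append, List.mem_append] at hz'
    rcases hz' with h | h
    · exact h
    · exfalso
      simp only [SimpleGraph.Walk.support_cons, SimpleGraph.Walk.support_nil,
        List.tail_cons, List.mem_singleton] at h
      exact hzw h

/-- On the unique path from `x` to `c`, the first step goes either directly to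
`c`, or to a vertex of degree at least two. -/
lemma first_step (hG : G.IsTree) {x c : V} (hxc : x ≠ c) :
    ∃ n, G.Adj x n ∧ (n = c ∨ (DegGe2 G n ∧ n ≠ c)) := by
  have hp := (hG.existsUnique_path x c).choose_spec.1
  generalize hP : (hG.existsUnique_path x c).choose = p at hp
  clear hP
  cases p with
  | nil => exact absurd rfl hxc
  | @cons _ n _ h q =>
    refine ⟨n, h, ?_⟩
    by_cases hnc : n = c
    · exact Or.inl hnc
    · refine Or.inr ⟨internal_degGe2 _ hp n ?_ h.ne' hnc, hnc⟩
      rw [SimpleGraph.Walk.support_cons]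
      exact List.mem_cons_of_mem _ q.start_mem_support

lemma star_of_center (hG : G.IsTree) {c : V} (hc2 : ∀ x, x ≠ c → G.Adj c x)
    (hD : ∀ z, DegGe2 G z → z = c) : IsStarGraph G := by
  refine ⟨c, fun a b => ⟨fun hab => ?_, fun hab => ?_⟩⟩
  · by_cases hac : a = c
    · refine Or.inl ⟨hac, fun hbc => ?_⟩
      subst hac; subst hbc
      exact hab.ne rfl
    · by_cases hbc : b = c
      · exact Or.inr ⟨hbc, hac⟩
      · exact absurd (hD a ⟨c, b, fun h => hbc h.symm, (hc2 a hac).symm, hab⟩) hac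
  · rcases hab with ⟨rfl, h⟩ | ⟨rfl, h⟩
    · exact hc2 b h
    · exact (hc2 a h).symm

lemma star_prop (hG : G.IsTree) (hstar : IsStarGraph G) (l : V → NNReal) :
    ∃ x₀ : V, ∀ x y : V, x ≠ y → treeDist hG l x₀ x ≤ treeDist hG l y x := by
  obtain ⟨c, hc⟩ := hstar
  refine ⟨c, fun x y hxy => ?_⟩
  by_cases hxc : x = c
  · subst hxc
    rw [treeDist_self]
    exact zero_le
  · have hcx : G.Adj c x := (hc c x).2 (Or.inl ⟨rfl, hxc⟩)
    by_cases hyc : y = c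
    · subst hyc; exact le_rfl
    · have hyc' : G.Adj y c := (hc y c).2 (Or.inr ⟨rfl, hyc⟩)
      have hp1 : (SimpleGraph.Walk.cons hcx SimpleGraph.Walk.nil).IsPath := by
        simp [hcx.ne]
      have hp2 : (SimpleGraph.Walk.cons hyc'
          (SimpleGraph.Walk.cons hcx SimpleGraph.Walk.nil)).IsPath := by
        simp [SimpleGraph.Walk.cons_isPath_iff, hcx.ne, hyc, Ne.symm hxy]
      rw [treeDist_eq hG l (fun h => hxc h.symm) _ hp1,
        treeDist_eq hG l (Ne.symm hxy) _ hp2]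
      simp only [SimpleGraph.Walk.support_cons, SimpleGraph.Walk.support_nil,
        List.map_cons, List.map_nil, List.foldr_cons, List.foldr_nil]
      exact le_max_right _ _

lemma dstar_half (hG : G.IsTree) {u v : V} (huv : u ≠ v) (hadj : G.Adj u v)
    (hstruct : ∀ x, x = u ∨ x = v ∨ (x ≠ u ∧ x ≠ v ∧ G.Adj u x ∧ ¬G.Adj v x) ∨
      (x ≠ u ∧ x ≠ v ∧ G.Adj v x ∧ ¬G.Adj u x))
    (l : V → NNReal) (hl : l u ≤ l v) :
    ∀ x y : V, x ≠ y → treeDist hG l u x ≤ treeDist hG l y x := by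
  have fold2 : ∀ {p q : V} (h1 : G.Adj p q),
      treeDist hG l p q = max (l p) (max (l q) 0) := by
    intro p q h1
    have hp : (SimpleGraph.Walk.cons h1 SimpleGraph.Walk.nil).IsPath := by
      simp [h1.ne]
    rw [treeDist_eq hG l h1.ne _ hp]
    simp only [SimpleGraph.Walk.support_cons, SimpleGraph.Walk.support_nil,
      List.map_cons, List.map_nil, List.foldr_cons, List.foldr_nil]
  have fold3 : ∀ {p q r : V} (h1 : G.Adj p q) (h2 : G.Adj q r),
      p ≠ q → p ≠ r → q ≠ r →
      treeDist hG l p r = max (l p) (max (l q) (max (l r) 0)) := by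
    intro p q r h1 h2 hpq hpr hqr
    have hp : (SimpleGraph.Walk.cons h1 (SimpleGraph.Walk.cons h2
        SimpleGraph.Walk.nil)).IsPath := by
      simp [SimpleGraph.Walk.cons_isPath_iff, hpq, hpr, hqr]
    rw [treeDist_eq hG l hpr _ hp]
    simp only [SimpleGraph.Walk.support_cons, SimpleGraph.Walk.support_nil,
      List.map_cons, List.map_nil, List.foldr_cons, List.foldr_nil]
  have fold4 : ∀ {p q r s : V} (h1 : G.Adj p q) (h2 : G.Adj q r) (h3 : G.Adj r s),
      p ≠ q → p ≠ r → p ≠ s → q ≠ r → q ≠ s → r ≠ s →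
      treeDist hG l p s = max (l p) (max (l q) (max (l r) (max (l s) 0))) := by
    intro p q r s h1 h2 h3 hpq hpr hps hqr hqs hrs
    have hp : (SimpleGraph.Walk.cons h1 (SimpleGraph.Walk.cons h2
        (SimpleGraph.Walk.cons h3 SimpleGraph.Walk.nil))).IsPath := by
      simp [SimpleGraph.Walk.cons_isPath_iff, hpq, hpr, hps, hqr, hqs, hrs]
    rw [treeDist_eq hG l hps _ hp]
    simp only [SimpleGraph.Walk.support_cons, SimpleGraph.Walk.support_nil,
      List.map_cons, List.map_nil, List.foldr_cons, List.foldr_nil]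
  intro x y hxy
  by_cases hxu : x = u
  · subst hxu; rw [treeDist_self]; exact zero_le
  by_cases hyu : y = u
  · subst hyu; exact le_rfl
  rcases hstruct x with rfl | rfl | ⟨hxu', hxv, hx1, hx2⟩ | ⟨hxu', hxv, hx1, hx2⟩
  · exact absurd rfl hxu
  · -- x = v
    rw [fold2 hadj]
    rcases hstruct y with rfl | rfl | ⟨hyu', hyv, hy1, hy2⟩ | ⟨hyu', hyv, hy1, hy2⟩
    · exact absurd rfl hyu
    · exact absurd rfl hxy.symm
    · rw [fold3 hy1.symm hadj hyu' hyv huv]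
      simp [max_le_iff, le_max_iff, hl]
    · rw [fold2 hy1.symm]
      simp [max_le_iff, le_max_iff, hl]
  · -- x is a leaf of u
    rw [fold2 hx1]
    rcases hstruct y with rfl | rfl | ⟨hyu', hyv, hy1, hy2⟩ | ⟨hyu', hyv, hy1, hy2⟩
    · exact absurd rfl hyu
    · -- y = v : path v - u - x
      rw [fold3 hadj.symm hx1 (fun h => huv h.symm) (fun h => hxv h.symm)
        (fun h => hxu' h.symm)]
      simp [max_le_iff, le_max_iff, hl]
    · -- y leaf of u : path y - u - x
      rw [fold3 hy1.symm hx1 hyu' (fun h => hxy h.symm) (fun h => hxu' h.symm)]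
      simp [max_le_iff, le_max_iff, hl]
    · -- y leaf of v : path y - v - u - x
      rw [fold4 hy1.symm hadj.symm hx1 hyv hyu' (fun h => hxy h.symm)
        (fun h => huv h.symm) (fun h => hxv h.symm) (fun h => hxu' h.symm)]
      simp [max_le_iff, le_max_iff, hl]
  · -- x is a leaf of v
    rw [fold3 hadj hx1 huv (fun h => hxu' h.symm) (fun h => hxv h.symm)]
    rcases hstruct y with rfl | rfl | ⟨hyu', hyv, hy1, hy2⟩ | ⟨hyu', hyv, hy1, hy2⟩
    · exact absurd rfl hyu
    · -- y = v : path v - x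
      rw [fold2 hx1]
      simp [max_le_iff, le_max_iff, hl]
    · -- y leaf of u : path y - u - v - x
      rw [fold4 hy1.symm hadj hx1 hyu' hyv (fun h => hxy h.symm) huv
        (fun h => hxu' h.symm) (fun h => hxv h.symm)]
      simp [max_le_iff, le_max_iff, hl]
    · -- y leaf of v : path y - v - x
      rw [fold3 hy1.symm hx1 hyv (fun h => hxy h.symm) (fun h => hxv h.symm)]
      simp [max_le_iff, le_max_iff, hl]

lemma doubleStar_prop (hG : G.IsTree) (hds : IsDoubleStar G) (l : V → NNReal) :
    ∃ x₀ : V, ∀ x y : V, x ≠ y → treeDist hG l x₀ x ≤ treeDist hG l y x := by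
  obtain ⟨-, u, v, huv, hu, hv, hmax⟩ := hds
  have hadj : G.Adj u v := by
    by_contra hnadj
    have hp := (hG.existsUnique_path u v).choose_spec.1
    obtain ⟨z, hz, hzu, hzv⟩ := second_vertex _ huv hnadj
    rcases hmax z (internal_degGe2 _ hp z hz hzu hzv) with rfl | rfl
    · exact hzu rfl
    · exact hzv rfl
  have hstruct : ∀ x, x = u ∨ x = v ∨ (x ≠ u ∧ x ≠ v ∧ G.Adj u x ∧ ¬G.Adj v x) ∨
      (x ≠ u ∧ x ≠ v ∧ G.Adj v x ∧ ¬G.Adj u x) := by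
    intro x
    by_cases hxu : x = u
    · exact Or.inl hxu
    by_cases hxv : x = v
    · exact Or.inr (Or.inl hxv)
    have hnboth : ¬(G.Adj u x ∧ G.Adj v x) := by
      rintro ⟨h1, h2⟩
      rcases hmax x ⟨u, v, huv, h1.symm, h2.symm⟩ with rfl | rfl
      · exact hxu rfl
      · exact hxv rfl
    have hor : G.Adj u x ∨ G.Adj v x := by
      obtain ⟨n, hxn, hcase⟩ := first_step hG hxu
      rcases hcase with rfl | ⟨hdn, hnu⟩
      · exact Or.inl hxn.symm
      · rcases hmax n hdn with rfl | rfl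
        · exact absurd rfl hnu
        · exact Or.inr hxn.symm
    rcases hor with h1 | h1
    · exact Or.inr (Or.inr (Or.inl ⟨hxu, hxv, h1, fun h2 => hnboth ⟨h1, h2⟩⟩))
    · exact Or.inr (Or.inr (Or.inr ⟨hxu, hxv, h1, fun h2 => hnboth ⟨h2, h1⟩⟩))
  rcases le_total (l u) (l v) with hl | hl
  · exact ⟨u, dstar_half hG huv hadj hstruct l hl⟩
  · refine ⟨v, dstar_half hG huv.symm hadj.symm ?_ l hl⟩
    intro x
    rcases hstruct x with h | h | h | h
    · exact Or.inr (Or.inl h)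
    · exact Or.inl h
    · exact Or.inr (Or.inr (Or.inr ⟨h.2.1, h.1, h.2.2.1, h.2.2.2⟩))
    · exact Or.inr (Or.inr (Or.inl ⟨h.2.1, h.1, h.2.2.1, h.2.2.2⟩))

lemma counterexample (hG : G.IsTree) {u w : V} (hne : u ≠ w) (hnadj : ¬G.Adj u w)
    (hu : DegGe2 G u) (hw : DegGe2 G w)
    (hL : ∀ l : V → NNReal, Nondeg G l →
      ∃ x₀ : V, ∀ x y : V, x ≠ y → treeDist hG l x₀ x ≤ treeDist hG l y x) :
    False := by
  classical
  set P : G.Walk u w := (hG.existsUnique_path u w).choose with hPdef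
  have hP : P.IsPath := (hG.existsUnique_path u w).choose_spec.1
  set l : V → NNReal := fun t => if t ∈ P.support ∧ t ≠ u ∧ t ≠ w then 2 else 1
    with hldef
  have hl1 : ∀ t, (t ∉ P.support ∨ t = u ∨ t = w) → l t = 1 := by
    intro t ht
    simp only [hldef]
    rw [if_neg]
    rintro ⟨h1, h2, h3⟩
    rcases ht with h | h | h
    exacts [h h1, h2 h, h3 h]
  have hge1 : ∀ t, (1 : NNReal) ≤ l t := by
    intro t
    simp only [hldef]
    split <;> norm_num
  have hnd : Nondeg G l := fun p q _ =>
    lt_of_lt_of_le one_pos ((hge1 p).trans (le_max_left _ _))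
  obtain ⟨x₀, hx₀⟩ := hL l hnd
  obtain ⟨a, hua, hna⟩ := exists_neighbor_off hG P hP hu
  obtain ⟨b, hwb, hnb'⟩ := exists_neighbor_off hG P.reverse hP.reverse hw
  have hnb : b ∉ P.support := fun h => hnb' (by
    rwa [SimpleGraph.Walk.support_reverse, List.mem_reverse])
  have hda : treeDist hG l u a = 1 := by
    have hp : (SimpleGraph.Walk.cons hua SimpleGraph.Walk.nil).IsPath := by
      simp [hua.ne]
    rw [treeDist_eq hG l hua.ne _ hp]
    simp only [SimpleGraph.Walk.support_cons, SimpleGraph.Walk.support_nil,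
      List.map_cons, List.map_nil, List.foldr_cons, List.foldr_nil]
    rw [hl1 u (Or.inr (Or.inl rfl)), hl1 a (Or.inl hna)]
    simp
  have hdb : treeDist hG l w b = 1 := by
    have hp : (SimpleGraph.Walk.cons hwb SimpleGraph.Walk.nil).IsPath := by
      simp [hwb.ne]
    rw [treeDist_eq hG l hwb.ne _ hp]
    simp only [SimpleGraph.Walk.support_cons, SimpleGraph.Walk.support_nil,
      List.map_cons, List.map_nil, List.foldr_cons, List.foldr_nil]
    rw [hl1 w (Or.inr (Or.inr rfl)), hl1 b (Or.inl hnb)]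
    simp
  have ha1 : treeDist hG l x₀ a ≤ 1 := hda ▸ hx₀ a u hua.ne'
  have hb1 : treeDist hG l x₀ b ≤ 1 := hdb ▸ hx₀ b w hwb.ne'
  have getWalk : ∀ y, l y ≤ 1 → treeDist hG l x₀ y ≤ 1 →
      ∃ q : G.Walk x₀ y, ∀ t ∈ q.support, l t ≤ 1 := by
    intro y hy hd
    by_cases hxy : x₀ = y
    · subst hxy
      refine ⟨SimpleGraph.Walk.nil, fun t ht => ?_⟩
      simp only [SimpleGraph.Walk.support_nil, List.mem_singleton] at ht
      subst ht
      exact hy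
    · have hp := (hG.existsUnique_path x₀ y).choose_spec.1
      refine ⟨(hG.existsUnique_path x₀ y).choose, fun t ht => ?_⟩
      have h1 : l t ≤ (((hG.existsUnique_path x₀ y).choose.support).map l).foldr max 0 :=
        le_foldrMax (List.mem_map_of_mem (f := l) ht)
      rw [← treeDist_eq hG l hxy _ hp] at h1
      exact h1.trans hd
  obtain ⟨qa, hqa⟩ := getWalk a (le_of_eq (hl1 a (Or.inl hna))) ha1
  obtain ⟨qb, hqb⟩ := getWalk b (le_of_eq (hl1 b (Or.inl hnb))) hb1
  obtain ⟨z, hz, hzu, hzw⟩ := second_vertex P hne hnadj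
  have hlz : l z = 2 := by
    simp only [hldef]
    rw [if_pos ⟨hz, hzu, hzw⟩]
  have hzmem : z ∈ (qa.reverse.append qb).support :=
    cross_lemma hG P hP hua hna hwb hnb hz hzu hzw _
  rw [SimpleGraph.Walk.support_append, List.mem_append] at hzmem
  have hle : l z ≤ 1 := by
    rcases hzmem with h | h
    · exact hqa z (by rwa [SimpleGraph.Walk.support_reverse, List.mem_reverse] at h)
    · exact hqb z (List.mem_of_mem_tail h)
  rw [hlz] at hle
  norm_num at hle

lemma structure_lemma (hG : G.IsTree)
    (hC : ∀ u w : V, u ≠ w → DegGe2 G u → DegGe2 G w → G.Adj u w) :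
    IsStarGraph G ∨ IsDoubleStar G := by
  by_cases h2 : ∃ u v : V, u ≠ v ∧ DegGe2 G u ∧ DegGe2 G v
  · obtain ⟨u, v, huv, hu, hv⟩ := h2
    refine Or.inr ⟨hG, u, v, huv, hu, hv, fun w hw => ?_⟩
    by_contra hcon
    push_neg at hcon
    obtain ⟨hwu, hwv⟩ := hcon
    have e1 : G.Adj u w := hC u w (fun h => hwu h.symm) hu hw
    have e2 : G.Adj v w := hC v w (fun h => hwv h.symm) hv hw
    have e3 : G.Adj u v := hC u v huv hu hv
    have p1 : (SimpleGraph.Walk.cons e1 SimpleGraph.Walk.nil).IsPath := by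
      simp [e1.ne]
    have p2 : (SimpleGraph.Walk.cons e3 (SimpleGraph.Walk.cons e2
        SimpleGraph.Walk.nil)).IsPath := by
      simp [SimpleGraph.Walk.cons_isPath_iff, e3.ne, e2.ne, e1.ne]
    have := uniquePath hG p1 p2
    simpa using congrArg SimpleGraph.Walk.length this
  · have huniq : ∀ p q : V, DegGe2 G p → DegGe2 G q → p = q := by
      intro p q hp hq
      by_contra hpq
      exact h2 ⟨p, q, hpq, hp, hq⟩
    by_cases hex : ∃ c, DegGe2 G c
    · obtain ⟨c, hc⟩ := hex
      refine Or.inl (star_of_center hG (fun x hx => ?_) (fun z hz => huniq z c hz hc))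
      obtain ⟨n, hxn, hcase⟩ := first_step hG hx
      rcases hcase with rfl | ⟨hdn, hnc⟩
      · exact hxn.symm
      · exact absurd (huniq n c hdn hc) hnc
    · obtain ⟨c⟩ := hG.isConnected.nonempty
      refine Or.inl (star_of_center hG (c := c) (fun x hx => ?_)
        (fun z hz => absurd ⟨z, hz⟩ hex))
      obtain ⟨n, hxn, hcase⟩ := first_step hG hx
      rcases hcase with rfl | ⟨hdn, hnc⟩
      · exact hxn.symm
      · exact absurd ⟨n, hdn⟩ hex

lemma degGe2_transfer {V' W : Type*} {G' : SimpleGraph V'} {S : SimpleGraph W}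
    (e : G' ≃g S) {x : V'} (h : DegGe2 S (e x)) : DegGe2 G' x := by
  obtain ⟨a, b, hab, ha, hb⟩ := h
  refine ⟨e.symm a, e.symm b, fun hq => hab ?_, ?_, ?_⟩
  · have := congrArg (⇑e) hq
    simpa using this
  · exact e.map_adj_iff.mp (by simpa using ha)
  · exact e.map_adj_iff.mp (by simpa using hb)

lemma star_transfer {V' W : Type*} {G' : SimpleGraph V'} {S : SimpleGraph W}
    (e : G' ≃g S) (h : IsStarGraph S) : IsStarGraph G' := by
  obtain ⟨c, hc⟩ := h
  refine ⟨e.symm c, fun a b => ?_⟩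
  have key : ∀ t : V', (t = e.symm c) = (e t = c) := by
    intro t
    apply propext
    constructor
    · rintro rfl; simp
    · intro ht; rw [← ht]; simp
  rw [← e.map_adj_iff, hc (e a) (e b)]
  simp only [ne_eq, key]

lemma doubleStar_transfer {V' W : Type*} {G' : SimpleGraph V'} {S : SimpleGraph W}
    (hG : G'.IsTree) (e : G' ≃g S) (h : IsDoubleStar S) : IsDoubleStar G' := by
  obtain ⟨-, u, v, huv, hu, hv, hmax⟩ := h
  refine ⟨hG, e.symm u, e.symm v, fun hq => huv ?_,
    degGe2_transfer e (by simpa using hu), degGe2_transfer e (by simpa using hv), ?_⟩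
  · have := congrArg (⇑e) hq
    simpa using this
  · intro x hx
    have hx' : DegGe2 S (e x) := degGe2_transfer e.symm (by simpa using hx)
    rcases hmax _ hx' with h1 | h1
    · exact Or.inl (by rw [← h1]; simp)
    · exact Or.inr (by rw [← h1]; simp)

end Aux

theorem stmt_12 {V : Type u} {G : SimpleGraph V} (hG : G.IsTree) :
    (∀ l : V → NNReal, Nondeg G l →
        ∃ x₀ : V, ∀ x y : V, x ≠ y → treeDist hG l x₀ x ≤ treeDist hG l y x) ↔
      (∃ (W : Type u) (S : SimpleGraph W),
        (IsStarGraph S ∨ IsDoubleStar S) ∧ Nonempty (G ≃g S)) := by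
  constructor
  · intro hL
    refine ⟨V, G, ?_, ⟨SimpleGraph.Iso.refl⟩⟩
    by_cases hC : ∀ u w : V, u ≠ w → DegGe2 G u → DegGe2 G w → G.Adj u w
    · exact structure_lemma hG hC
    · exfalso
      push_neg at hC
      obtain ⟨u, w, hne, hu, hw, hnadj⟩ := hC
      exact counterexample hG hne hnadj hu hw hL
  · rintro ⟨W, S, hS, ⟨e⟩⟩
    intro l _
    rcases hS with h | h
    · exact star_prop hG (star_transfer e h) l
    · exact doubleStar_prop hG (doubleStar_transfer hG e h) l
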